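/- arXiv:2012.03795 — 2 statements merged into one kernel-verified Lean document; each statement's English description precedes it below -/
import Mathlib

section
/- Let h : [-1,1] → ℝ be C¹ with h(1) > 0, and suppose there exists y⋆ ∈ [0,1) with 2h(y⋆) = √(1-y⋆²). Then the set {y ∈ [0,1) : 2h(y) = √(1-y²)} has a maximum y₀, and any maximal orbit γ = (x,y) : (0,b) → Θ of F₁ with γ(s) → (0,1) as s → 0⁺ satisfies: b = ∞; x is strictly increasing with x(s) → ∞ as s → ∞; and y is strictly decreasing with y(s) > y₀ for all s and y(s) → y₀ as s → ∞. -/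
open Filter Set

/-- The vector field `F_ε` of the phase plane system: `F_ε(x,y) =
(y, (1-y²)/tanh x − 2ε·h(y)·√(1-y²))`. -/
noncomputable def F (h : ℝ → ℝ) (ε : ℝ) (p : ℝ × ℝ) : ℝ × ℝ :=
  (p.2, (1 - p.2 ^ 2) / Real.tanh p.1 - 2 * ε * h p.2 * Real.sqrt (1 - p.2 ^ 2))

/-- The phase plane `Θ = (0,∞) × (-1,1)`. -/
def PhasePlane : Set (ℝ × ℝ) := Set.Ioi (0 : ℝ) ×ˢ Set.Ioo (-1 : ℝ) 1

/-- `γ` is an orbit of `F_ε` on the open interval `I`: it takes values in `Θ` and solves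
`γ' = F_ε ∘ γ` on `I`. -/
def IsOrbitOn (h : ℝ → ℝ) (ε : ℝ) (γ : ℝ → ℝ × ℝ) (I : Set ℝ) : Prop :=
  IsOpen I ∧ I.OrdConnected ∧ ∀ s ∈ I, γ s ∈ PhasePlane ∧ HasDerivAt γ (F h ε (γ s)) s

/-- A maximal orbit: an orbit admitting no extension to a solution on a strictly
larger interval. -/
def IsMaxOrbitOn (h : ℝ → ℝ) (ε : ℝ) (γ : ℝ → ℝ × ℝ) (I : Set ℝ) : Prop :=
  IsOrbitOn h ε γ I ∧
    ∀ (δ : ℝ → ℝ × ℝ) (J : Set ℝ), IsOrbitOn h ε δ J → I ⊆ J → Set.EqOn δ γ I → J = I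

/-- The open interval of reals with (possibly infinite) extended-real endpoints. -/
def EIoo (a b : EReal) : Set ℝ := {s : ℝ | a < (s : EReal) ∧ (s : EReal) < b}

/-- The inverse hyperbolic tangent. -/
noncomputable def arctanh (x : ℝ) : ℝ := Real.log ((1 + x) / (1 - x)) / 2

open Topology

/-!
Put `yFactor h (x, y) = √(1 - y²) - 2 h(y) tanh x`, so that along an orbit
`y' = √(1 - y²) · yFactor / tanh x`. On the line `y = y₀` we get
`yFactor = √(1 - y₀²) (1 - tanh x) > 0`, so an orbit coming down from `y = 1` never reaches
it. At a zero of `yFactor` we have `y' = 0` and hence `yFactor' = -2 h(y) y / cosh² x < 0`, so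
`yFactor` only crosses `0` downwards; since `y → 1` as `s → 0⁺`, `yFactor ≤ 0` happens
arbitrarily early, and therefore `yFactor < 0` all along the orbit. So `x` increases and `y`
decreases above `y₀`; at a finite endpoint both would converge to a point of `Θ`, through
which the orbit continues, so `b = ∞`. Finally, `y` converges, so `y' → 0`: this rules out a
bounded `x`, and then identifies `lim y` as a root above `y₀`, that is, `y₀` itself.
-/

namespace Real

lemma tanh_pos {x : ℝ} (hx : 0 < x) : 0 < tanh x := by
  rw [tanh_eq_sinh_div_cosh]
  exact div_pos (sinh_pos_iff.2 hx) (cosh_pos x)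

lemma hasDerivAt_tanh (x : ℝ) : HasDerivAt tanh (1 / cosh x ^ 2) x := by
  have h := (hasDerivAt_sinh x).div (hasDerivAt_cosh x) (cosh_pos x).ne'
  rw [show tanh = sinh / cosh from funext tanh_eq_sinh_div_cosh]
  refine h.congr_deriv ?_
  rw [← cosh_sq_sub_sinh_sq x]
  ring

lemma contDiff_tanh {n : WithTop ℕ∞} : ContDiff ℝ n tanh := by
  rw [show tanh = fun x => sinh x / cosh x from funext tanh_eq_sinh_div_cosh]
  exact contDiff_sinh.div contDiff_cosh fun x => (cosh_pos x).ne'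

lemma tendsto_tanh_atTop : Tendsto tanh atTop (𝓝 1) := by
  have hexp : Tendsto (fun x => exp (-2 * x)) atTop (𝓝 0) :=
    tendsto_exp_atBot.comp (tendsto_id.const_mul_atTop_of_neg (by norm_num))
  have key : ∀ x, tanh x = (1 - exp (-2 * x)) / (1 + exp (-2 * x)) := fun x => by
    rw [tanh_eq, show -2 * x = -x + -x by ring, exp_add, exp_neg]
    field_simp
  have lim := ((tendsto_const_nhds (x := (1 : ℝ))).sub hexp).div
    (tendsto_const_nhds.add hexp) (by norm_num : (1 : ℝ) + 0 ≠ 0)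
  rw [sub_zero, add_zero, div_one] at lim
  exact lim.congr fun x => (key x).symm

end Real

lemma MonotoneOn.tendsto_atTop_or_exists_tendsto {α β : Type*} [Preorder α] [IsDirectedOrder α]
    [NoMaxOrder α] [ConditionallyCompleteLinearOrder β] [TopologicalSpace β] [OrderTopology β]
    {f : α → β} {a : α} (hf : MonotoneOn f (Ioi a)) :
    Tendsto f atTop atTop ∨ ∃ l, Tendsto f atTop (𝓝 l) := by
  simp_rw [← map_val_Ioi_atTop a, tendsto_map'_iff]
  exact tendsto_atTop_of_monotone (monotoneOn_iff_monotone.1 hf)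

lemma AntitoneOn.tendsto_atBot_or_exists_tendsto {α β : Type*} [Preorder α] [IsDirectedOrder α]
    [NoMaxOrder α] [ConditionallyCompleteLinearOrder β] [TopologicalSpace β] [OrderTopology β]
    {f : α → β} {a : α} (hf : AntitoneOn f (Ioi a)) :
    Tendsto f atTop atBot ∨ ∃ l, Tendsto f atTop (𝓝 l) := by
  simp_rw [← map_val_Ioi_atTop a, tendsto_map'_iff]
  exact tendsto_atTop_of_antitone (antitoneOn_iff_antitone.1 hf)

/-- The mean value theorem on `[s, s + 1]` turns `f (s + 1) - f s → 0` into `f' ξ → 0`. -/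
lemma eq_zero_of_tendsto_of_tendsto_deriv {f f' : ℝ → ℝ} {L c : ℝ}
    (hf : ∀ᶠ s in atTop, HasDerivAt f (f' s) s) (hfL : Tendsto f atTop (𝓝 L))
    (hf' : Tendsto f' atTop (𝓝 c)) : c = 0 := by
  obtain ⟨s₀, hs₀⟩ := eventually_atTop.1 hf
  have hmax : Tendsto (fun s => max s s₀) atTop atTop :=
    tendsto_atTop_mono (le_max_left · s₀) tendsto_id
  have hmvt : ∀ s, ∃ ξ ∈ Ioo (max s s₀) (max s s₀ + 1),
      f' ξ = (f (max s s₀ + 1) - f (max s s₀)) / (max s s₀ + 1 - max s s₀) := fun s =>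
    exists_hasDerivAt_eq_slope f f' (lt_add_one _)
      (fun t ht => (hs₀ t ((le_max_right _ _).trans ht.1)).continuousAt.continuousWithinAt)
      (fun t ht => hs₀ t ((le_max_right _ _).trans ht.1.le))
  choose ξ hξ hξf using hmvt
  have hξtop : Tendsto ξ atTop atTop :=
    tendsto_atTop_mono (fun s => (le_max_left _ _).trans (hξ s).1.le) tendsto_id
  have hdiff : Tendsto (fun s => f' (ξ s)) atTop (𝓝 (L - L)) := by
    simp_rw [hξf, add_sub_cancel_left, div_one]
    exact (hfL.comp (tendsto_atTop_add_const_right _ 1 hmax)).sub (hfL.comp hmax)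
  simpa using tendsto_nhds_unique (hf'.comp hξtop) hdiff

lemma hasDerivAt_ite_of_tendsto {E : Type*} [NormedAddCommGroup E] [NormedSpace ℝ E]
    {f g f' : ℝ → E} {b : ℝ} {v : E} (hf : ∀ᶠ t in 𝓝[<] b, HasDerivAt f (f' t) t)
    (hf' : Tendsto f' (𝓝[<] b) (𝓝 v)) (hfg : Tendsto f (𝓝[<] b) (𝓝 (g b)))
    (hg : HasDerivAt g v b) : HasDerivAt (fun t => if t < b then f t else g t) v b := by
  set δ : ℝ → E := fun t => if t < b then f t else g t with hδ
  obtain ⟨a, hab, hsub⟩ := mem_nhdsLT_iff_exists_Ioo_subset.1 hf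
  have hδf : ∀ t ∈ Ioo a b, HasDerivAt δ (f' t) t := fun t ht =>
    (hsub ht).congr_of_eventuallyEq <| by
      filter_upwards [Iio_mem_nhds ht.2] with u hu
      exact if_pos hu
  have hleft : HasDerivWithinAt δ v (Iic b) b := by
    refine hasDerivWithinAt_Iic_of_tendsto_deriv
      (fun t ht => (hδf t ht).differentiableAt.differentiableWithinAt) ?_ (Ioo_mem_nhdsLT hab) ?_
    · have : Tendsto f (𝓝[Ioo a b] b) (𝓝 (δ b)) := by
        simpa [hδ] using hfg.mono_left (nhdsWithin_mono _ Ioo_subset_Iio_self)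
      exact this.congr' (eventually_nhdsWithin_of_forall fun t ht => (if_pos ht.2).symm)
    · refine hf'.congr' ?_
      filter_upwards [Ioo_mem_nhdsLT hab] with t ht
      exact (hδf t ht).deriv.symm
  have hright : HasDerivWithinAt δ v (Ici b) b :=
    hg.hasDerivWithinAt.congr (fun t ht => if_neg (not_lt.2 ht)) (if_neg (lt_irrefl b))
  simpa using hleft.union hright

lemma isOpen_phasePlane : IsOpen PhasePlane := isOpen_Ioi.prod isOpen_Ioo

lemma one_sub_sq_pos_of_mem_phasePlane {p : ℝ × ℝ} (hp : p ∈ PhasePlane) : 0 < 1 - p.2 ^ 2 := by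
  nlinarith [hp.2.1, hp.2.2]

lemma contDiffAt_F {h : ℝ → ℝ} (hC : ContDiffOn ℝ 1 h (Icc (-1) 1)) (ε : ℝ) {p : ℝ × ℝ}
    (hp : p ∈ PhasePlane) : ContDiffAt ℝ 1 (F h ε) p := by
  have hh : ContDiffAt ℝ 1 (fun q : ℝ × ℝ => h q.2) p :=
    (hC.contDiffAt (Icc_mem_nhds hp.2.1 hp.2.2)).comp p contDiffAt_snd
  have hsqrt : ContDiffAt ℝ 1 (fun q : ℝ × ℝ => √(1 - q.2 ^ 2)) p :=
    (Real.contDiffAt_sqrt (one_sub_sq_pos_of_mem_phasePlane hp).ne').comp p (by fun_prop)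
  have htanh : ContDiffAt ℝ 1 (fun q : ℝ × ℝ => Real.tanh q.1) p :=
    (Real.contDiff_tanh.comp contDiff_fst).contDiffAt
  have hsq : ContDiffAt ℝ 1 (fun q : ℝ × ℝ => 1 - q.2 ^ 2) p := by fun_prop
  exact contDiffAt_snd.prodMk ((hsq.div htanh (Real.tanh_pos hp.1).ne').sub
    ((contDiffAt_const.mul hh).mul hsqrt))

lemma exists_isOrbitOn_Ioo {h : ℝ → ℝ} (hC : ContDiffOn ℝ 1 h (Icc (-1) 1)) (ε : ℝ)
    {p : ℝ × ℝ} (hp : p ∈ PhasePlane) (t₀ : ℝ) :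
    ∃ ψ : ℝ → ℝ × ℝ, ∃ l u, t₀ ∈ Ioo l u ∧ ψ t₀ = p ∧ IsOrbitOn h ε ψ (Ioo l u) := by
  obtain ⟨ψ, hψ₀, r, hr, hψ⟩ :=
    (contDiffAt_F hC ε hp).exists_forall_mem_closedBall_exists_eq_forall_mem_Ioo_hasDerivAt₀ t₀
  have ht₀ : t₀ ∈ Ioo (t₀ - r) (t₀ + r) := ⟨by linarith, by linarith⟩
  have hev : ∀ᶠ t in 𝓝 t₀, ψ t ∈ PhasePlane ∧ t ∈ Ioo (t₀ - r) (t₀ + r) :=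
    ((hψ t₀ ht₀).continuousAt.eventually_mem (isOpen_phasePlane.mem_nhds (hψ₀ ▸ hp))).and
      (isOpen_Ioo.mem_nhds ht₀)
  obtain ⟨l, u, hlu, hsub⟩ := mem_nhds_iff_exists_Ioo_subset.1 hev
  exact ⟨ψ, l, u, hlu, hψ₀, isOpen_Ioo, ordConnected_Ioo,
    fun t ht => ⟨(hsub ht).1, hψ t (hsub ht).2⟩⟩

section Orbit

variable {h : ℝ → ℝ} {ε : ℝ} {γ : ℝ → ℝ × ℝ} {I : Set ℝ} {s : ℝ}

lemma IsOrbitOn.mem (hγ : IsOrbitOn h ε γ I) (hs : s ∈ I) : γ s ∈ PhasePlane :=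
  (hγ.2.2 s hs).1

lemma IsOrbitOn.hasDerivAt (hγ : IsOrbitOn h ε γ I) (hs : s ∈ I) :
    HasDerivAt γ (F h ε (γ s)) s :=
  (hγ.2.2 s hs).2

lemma IsOrbitOn.hasDerivAt_fst (hγ : IsOrbitOn h ε γ I) (hs : s ∈ I) :
    HasDerivAt (fun t => (γ t).1) (γ s).2 s :=
  (hasFDerivAt_fst (p := γ s)).comp_hasDerivAt s (hγ.hasDerivAt hs)

lemma IsOrbitOn.hasDerivAt_snd (hγ : IsOrbitOn h ε γ I) (hs : s ∈ I) :
    HasDerivAt (fun t => (γ t).2) (F h ε (γ s)).2 s :=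
  (hasFDerivAt_snd (p := γ s)).comp_hasDerivAt s (hγ.hasDerivAt hs)

lemma IsOrbitOn.strictMonoOn_of_deriv_pos (hγ : IsOrbitOn h ε γ I) {g g' : ℝ → ℝ}
    (hg : ∀ t ∈ I, HasDerivAt g (g' t) t) (hg' : ∀ t ∈ I, 0 < g' t) : StrictMonoOn g I := by
  refine strictMonoOn_of_hasDerivWithinAt_pos (f' := g') hγ.2.1.convex
    (fun t ht => (hg t ht).continuousAt.continuousWithinAt) ?_ ?_ <;> rw [hγ.1.interior_eq]
  exacts [fun t ht => (hg t ht).hasDerivWithinAt, hg']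

lemma IsOrbitOn.strictMonoOn_sub_fst (hγ : IsOrbitOn h ε γ I) :
    StrictMonoOn (fun t => t - (γ t).1) I :=
  hγ.strictMonoOn_of_deriv_pos (fun t ht => (hasDerivAt_id t).sub (hγ.hasDerivAt_fst ht))
    fun _ ht => sub_pos.2 (hγ.mem ht).2.2

lemma IsOrbitOn.ite (hC : ContDiffOn ℝ 1 h (Icc (-1) 1)) {ψ : ℝ → ℝ × ℝ} {a b l u : ℝ}
    (hab : a < b) (hγ : IsOrbitOn h ε γ (Ioo a b)) (hψ : IsOrbitOn h ε ψ (Ioo l u))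
    (hb : b ∈ Ioo l u) (hlim : Tendsto γ (𝓝[<] b) (𝓝 (ψ b))) :
    IsOrbitOn h ε (fun t => if t < b then γ t else ψ t) (Ioo a u) := by
  refine ⟨isOpen_Ioo, ordConnected_Ioo, fun t ht => ?_⟩
  rcases lt_trichotomy t b with htb | rfl | hbt
  · have hδ : (fun t => if t < b then γ t else ψ t) =ᶠ[𝓝 t] γ := by
      filter_upwards [Iio_mem_nhds htb] with u hu
      exact if_pos hu
    beta_reduce
    rw [if_pos htb]
    exact ⟨hγ.mem ⟨ht.1, htb⟩, (hγ.hasDerivAt ⟨ht.1, htb⟩).congr_of_eventuallyEq hδ⟩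
  · beta_reduce
    rw [if_neg (lt_irrefl t)]
    refine ⟨hψ.mem hb, hasDerivAt_ite_of_tendsto (f' := fun u => F h ε (γ u)) ?_ ?_ hlim
      (hψ.hasDerivAt hb)⟩
    · filter_upwards [Ioo_mem_nhdsLT hab] with u hu
      exact hγ.hasDerivAt hu
    · exact (contDiffAt_F hC ε (hψ.mem hb)).continuousAt.tendsto.comp hlim
  · have hδ : (fun t => if t < b then γ t else ψ t) =ᶠ[𝓝 t] ψ := by
      filter_upwards [Ioi_mem_nhds hbt] with u hu
      exact if_neg (not_lt.2 (le_of_lt hu))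
    have htψ : t ∈ Ioo l u := ⟨hb.1.trans hbt, ht.2⟩
    beta_reduce
    rw [if_neg (not_lt.2 hbt.le)]
    exact ⟨hψ.mem htψ, (hψ.hasDerivAt htψ).congr_of_eventuallyEq hδ⟩

end Orbit

/-- The `y ∈ [0,1)` at which `(F h 1 (x, y)).2` vanishes in the limit `x → ∞`, where
`tanh x → 1`. -/
def rootSet (h : ℝ → ℝ) : Set ℝ := {y ∈ Ico (0 : ℝ) 1 | 2 * h y = √(1 - y ^ 2)}

lemma exists_isGreatest_rootSet {h : ℝ → ℝ} (hc : ContinuousOn h (Icc 0 1)) (h1 : 0 < h 1)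
    (hne : (rootSet h).Nonempty) : ∃ y₀, IsGreatest (rootSet h) y₀ := by
  have hS : rootSet h = {y ∈ Icc (0 : ℝ) 1 | 2 * h y = √(1 - y ^ 2)} := by
    ext y
    refine ⟨fun hy => ⟨Ico_subset_Icc_self hy.1, hy.2⟩, fun hy => ⟨⟨hy.1.1, ?_⟩, hy.2⟩⟩
    refine hy.1.2.lt_of_ne ?_
    rintro rfl
    simp [h1.ne'] at hy
  have hclosed : IsClosed {y ∈ Icc (0 : ℝ) 1 | 2 * h y = √(1 - y ^ 2)} :=
    ((continuousOn_const.mul hc).prodMk (by fun_prop : ContinuousOn (fun y : ℝ => √(1 - y ^ 2))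
      (Icc 0 1))).preimage_isClosed_of_isClosed isClosed_Icc isClosed_diagonal
  rw [hS] at hne ⊢
  exact (isCompact_Icc.of_isClosed_subset hclosed fun y hy => hy.1).exists_isGreatest hne

noncomputable def yFactor (h : ℝ → ℝ) (p : ℝ × ℝ) : ℝ :=
  √(1 - p.2 ^ 2) - 2 * h p.2 * Real.tanh p.1

section YFactor

variable {h : ℝ → ℝ} {p : ℝ × ℝ}

lemma F_snd_eq_mul_yFactor (hp : p ∈ PhasePlane) :
    (F h 1 p).2 = √(1 - p.2 ^ 2) * yFactor h p / Real.tanh p.1 := by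
  have hsq := Real.sq_sqrt (one_sub_sq_pos_of_mem_phasePlane hp).le
  have htanh := (Real.tanh_pos hp.1).ne'
  simp only [F, yFactor]
  field_simp
  linear_combination -hsq

lemma F_snd_pos_iff (hp : p ∈ PhasePlane) : 0 < (F h 1 p).2 ↔ 0 < yFactor h p := by
  rw [F_snd_eq_mul_yFactor hp, div_pos_iff_of_pos_right (Real.tanh_pos hp.1),
    mul_pos_iff_of_pos_left (Real.sqrt_pos.2 (one_sub_sq_pos_of_mem_phasePlane hp))]

lemma F_snd_neg_of_yFactor_neg (hp : p ∈ PhasePlane) (hU : yFactor h p < 0) :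
    (F h 1 p).2 < 0 := by
  rw [F_snd_eq_mul_yFactor hp]
  exact div_neg_of_neg_of_pos
    (mul_neg_of_pos_of_neg (Real.sqrt_pos.2 (one_sub_sq_pos_of_mem_phasePlane hp)) hU)
    (Real.tanh_pos hp.1)

lemma yFactor_pos_of_root (hp : p ∈ PhasePlane) (hroot : 2 * h p.2 = √(1 - p.2 ^ 2)) :
    0 < yFactor h p := by
  rw [yFactor, hroot]
  have := Real.tanh_lt_one p.1
  have := Real.sqrt_pos.2 (one_sub_sq_pos_of_mem_phasePlane hp)
  nlinarith

end YFactor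

section OrbitYFactor

variable {h : ℝ → ℝ} {γ : ℝ → ℝ × ℝ} {I : Set ℝ} {s : ℝ}

lemma IsOrbitOn.differentiableAt_yFactor (hC : ContDiffOn ℝ 1 h (Icc (-1) 1))
    (hγ : IsOrbitOn h 1 γ I) (hs : s ∈ I) :
    DifferentiableAt ℝ (fun t => yFactor h (γ t)) s := by
  have hp := hγ.mem hs
  have hx := (hγ.hasDerivAt_fst hs).differentiableAt
  have hy := (hγ.hasDerivAt_snd hs).differentiableAt
  have hh := (hC.contDiffAt (Icc_mem_nhds hp.2.1 hp.2.2)).differentiableAt one_ne_zero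
  exact (((hy.pow 2).const_sub 1).sqrt (one_sub_sq_pos_of_mem_phasePlane hp).ne').sub
    (((hh.comp s hy).const_mul 2).mul ((Real.hasDerivAt_tanh _).differentiableAt.comp s hx))

lemma IsOrbitOn.deriv_yFactor_neg (hC : ContDiffOn ℝ 1 h (Icc (-1) 1))
    (hγ : IsOrbitOn h 1 γ I) (hs : s ∈ I) (hU : yFactor h (γ s) = 0) (hy : 0 < (γ s).2) :
    deriv (fun t => yFactor h (γ t)) s < 0 := by
  have hp := hγ.mem hs
  have hy' : HasDerivAt (fun t => (γ t).2) 0 s := by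
    simpa [F_snd_eq_mul_yFactor hp, hU] using hγ.hasDerivAt_snd hs
  have hsqrt := ((hy'.pow 2).const_sub 1).sqrt (one_sub_sq_pos_of_mem_phasePlane hp).ne'
  have hh := ((hC.contDiffAt (Icc_mem_nhds hp.2.1 hp.2.2)).differentiableAt
    one_ne_zero).hasDerivAt.comp s hy'
  have htanh := (Real.hasDerivAt_tanh _).comp s (hγ.hasDerivAt_fst hs)
  have hderiv : HasDerivAt (fun t => yFactor h (γ t))
      (-(2 * h (γ s).2 * (γ s).2 / Real.cosh (γ s).1 ^ 2)) s := by
    refine (hsqrt.sub ((hh.const_mul 2).mul htanh)).congr_deriv ?_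
    simp only [Function.comp_apply]
    ring
  have hh0 : 0 < h (γ s).2 := by
    have := Real.sqrt_pos.2 (one_sub_sq_pos_of_mem_phasePlane hp)
    have := Real.tanh_pos hp.1
    simp only [yFactor, sub_eq_zero] at hU
    nlinarith
  rw [hderiv.deriv, neg_lt_zero]
  exact div_pos (mul_pos (mul_pos two_pos hh0) hy) (pow_pos (Real.cosh_pos _) 2)

end OrbitYFactor

section EIoo

variable {b : EReal} {s : ℝ}

lemma pos_of_mem_EIoo_zero (hs : s ∈ EIoo 0 b) : 0 < s := EReal.coe_pos.1 hs.1

lemma Ioc_subset_EIoo_zero (hs : s ∈ EIoo 0 b) : Ioc 0 s ⊆ EIoo 0 b :=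
  fun _ ht => ⟨EReal.coe_pos.2 ht.1, (EReal.coe_le_coe_iff.2 ht.2).trans_lt hs.2⟩

lemma mem_EIoo_zero_top (hs : 0 < s) : s ∈ EIoo 0 ⊤ := ⟨EReal.coe_pos.2 hs, EReal.coe_lt_top s⟩

lemma eventually_mem_EIoo_zero_top : ∀ᶠ s in atTop, s ∈ EIoo 0 ⊤ :=
  (eventually_gt_atTop 0).mono fun _ => mem_EIoo_zero_top

lemma EIoo_zero_top : EIoo 0 ⊤ = Ioi 0 := by
  ext s
  simp [EIoo]

lemma EIoo_zero_coe (B : ℝ) : EIoo 0 B = Ioo 0 B := by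
  ext s
  simp [EIoo]

end EIoo

section Invariance

variable {h : ℝ → ℝ} {γ : ℝ → ℝ × ℝ} {b : EReal} {y₀ s : ℝ}

lemma exists_snd_gt_of_tendsto (hlim : Tendsto (fun t => (γ t).2) (𝓝[>] 0) (𝓝 1)) {c : ℝ}
    (hc : c < 1) (hs : 0 < s) : ∃ t ∈ Ioo 0 s, c < (γ t).2 :=
  (Filter.Eventually.and (Ioo_mem_nhdsGT hs) (hlim.eventually_const_lt hc)).exists

lemma IsOrbitOn.le_snd (hγ : IsOrbitOn h 1 γ (EIoo 0 b))
    (hlim : Tendsto (fun t => (γ t).2) (𝓝[>] 0) (𝓝 1)) (hy₀ : y₀ ∈ rootSet h)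
    (hs : s ∈ EIoo 0 b) : y₀ ≤ (γ s).2 := by
  obtain ⟨t, ht, hyt⟩ := exists_snd_gt_of_tendsto hlim hy₀.1.2 (pos_of_mem_EIoo_zero hs)
  have hsub : Icc t s ⊆ EIoo 0 b := fun u hu =>
    Ioc_subset_EIoo_zero hs ⟨ht.1.trans_le hu.1, hu.2⟩
  refine image_le_of_deriv_right_lt_deriv_boundary' (f' := fun _ => 0) continuousOn_const
    (fun _ _ => hasDerivWithinAt_const _ _ _) hyt.le (B' := fun u => (F h 1 (γ u)).2)
    (fun u hu => (hγ.hasDerivAt_snd (hsub hu)).continuousAt.continuousWithinAt)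
    (fun u hu => (hγ.hasDerivAt_snd (hsub (Ico_subset_Icc_self hu))).hasDerivWithinAt)
    (fun u hu hyu => ?_) ⟨ht.2.le, le_rfl⟩
  have hp := hγ.mem (hsub (Ico_subset_Icc_self hu))
  exact (F_snd_pos_iff hp).2 (yFactor_pos_of_root hp (hyu ▸ hy₀.2))

lemma IsOrbitOn.lt_snd (hγ : IsOrbitOn h 1 γ (EIoo 0 b))
    (hlim : Tendsto (fun t => (γ t).2) (𝓝[>] 0) (𝓝 1)) (hy₀ : y₀ ∈ rootSet h)
    (hs : s ∈ EIoo 0 b) : y₀ < (γ s).2 := by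
  refine (hγ.le_snd hlim hy₀ hs).lt_of_ne fun heq => ?_
  have hmin : IsLocalMin (fun t => (γ t).2) s := by
    filter_upwards [hγ.1.mem_nhds hs] with t ht
    exact heq ▸ hγ.le_snd hlim hy₀ ht
  have hp := hγ.mem hs
  exact ((F_snd_pos_iff hp).2 (yFactor_pos_of_root hp (heq ▸ hy₀.2))).ne'
    (hmin.hasDerivAt_eq_zero (hγ.hasDerivAt_snd hs))

lemma IsOrbitOn.exists_yFactor_nonpos (hγ : IsOrbitOn h 1 γ (EIoo 0 b))
    (hlim : Tendsto (fun t => (γ t).2) (𝓝[>] 0) (𝓝 1)) (hs : s ∈ EIoo 0 b) :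
    ∃ t ∈ Ioo 0 s, yFactor h (γ t) ≤ 0 := by
  by_contra! hpos
  have hs0 := pos_of_mem_EIoo_zero hs
  have hsub := Ioc_subset_EIoo_zero hs
  have hmono : StrictMonoOn (fun t => (γ t).2) (Ioc 0 s) := by
    refine strictMonoOn_of_hasDerivWithinAt_pos (f' := fun t => (F h 1 (γ t)).2)
      (convex_Ioc 0 s) (fun t ht => (hγ.hasDerivAt_snd (hsub ht)).continuousAt.continuousWithinAt)
      ?_ ?_ <;> rw [interior_Ioc]
    · exact fun t ht => (hγ.hasDerivAt_snd (hsub (Ioo_subset_Ioc_self ht))).hasDerivWithinAt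
    · exact fun t ht => (F_snd_pos_iff (hγ.mem (hsub (Ioo_subset_Ioc_self ht)))).2 (hpos t ht)
  obtain ⟨t, ht, hyt⟩ := exists_snd_gt_of_tendsto hlim (hγ.mem hs).2.2 hs0
  exact (hmono ⟨ht.1, ht.2.le⟩ ⟨hs0, le_rfl⟩ ht.2).not_gt hyt

lemma IsOrbitOn.yFactor_nonpos (hC : ContDiffOn ℝ 1 h (Icc (-1) 1))
    (hγ : IsOrbitOn h 1 γ (EIoo 0 b)) (hlim : Tendsto (fun t => (γ t).2) (𝓝[>] 0) (𝓝 1))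
    (hy₀ : y₀ ∈ rootSet h) (hs : s ∈ EIoo 0 b) : yFactor h (γ s) ≤ 0 := by
  obtain ⟨t, ht, hUt⟩ := hγ.exists_yFactor_nonpos hlim hs
  have hsub : Icc t s ⊆ EIoo 0 b := fun u hu =>
    Ioc_subset_EIoo_zero hs ⟨ht.1.trans_le hu.1, hu.2⟩
  have hdiff : ∀ u ∈ Icc t s, DifferentiableAt ℝ (fun t => yFactor h (γ t)) u :=
    fun u hu => hγ.differentiableAt_yFactor hC (hsub hu)
  refine image_le_of_deriv_right_lt_deriv_boundary (B := fun _ => 0) (B' := fun _ => 0)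
    (fun u hu => (hdiff u hu).continuousAt.continuousWithinAt)
    (fun u hu => (hdiff u (Ico_subset_Icc_self hu)).hasDerivAt.hasDerivWithinAt) hUt
    (fun _ => hasDerivAt_const _ _) (fun u hu hU => ?_) ⟨ht.2.le, le_rfl⟩
  have hu := hsub (Ico_subset_Icc_self hu)
  exact hγ.deriv_yFactor_neg hC hu hU (hy₀.1.1.trans_lt (hγ.lt_snd hlim hy₀ hu))

lemma IsOrbitOn.yFactor_neg (hC : ContDiffOn ℝ 1 h (Icc (-1) 1))
    (hγ : IsOrbitOn h 1 γ (EIoo 0 b)) (hlim : Tendsto (fun t => (γ t).2) (𝓝[>] 0) (𝓝 1))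
    (hy₀ : y₀ ∈ rootSet h) (hs : s ∈ EIoo 0 b) : yFactor h (γ s) < 0 := by
  refine (hγ.yFactor_nonpos hC hlim hy₀ hs).lt_of_ne fun hU => ?_
  have hmax : IsLocalMax (fun t => yFactor h (γ t)) s := by
    filter_upwards [hγ.1.mem_nhds hs] with t ht
    exact hU ▸ hγ.yFactor_nonpos hC hlim hy₀ ht
  exact (hγ.deriv_yFactor_neg hC hs hU (hy₀.1.1.trans_lt (hγ.lt_snd hlim hy₀ hs))).ne
    hmax.deriv_eq_zero

lemma IsOrbitOn.strictMonoOn_fst (hγ : IsOrbitOn h 1 γ (EIoo 0 b))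
    (hlim : Tendsto (fun t => (γ t).2) (𝓝[>] 0) (𝓝 1)) (hy₀ : y₀ ∈ rootSet h) :
    StrictMonoOn (fun t => (γ t).1) (EIoo 0 b) :=
  hγ.strictMonoOn_of_deriv_pos (fun _ ht => hγ.hasDerivAt_fst ht)
    fun _ ht => hy₀.1.1.trans_lt (hγ.lt_snd hlim hy₀ ht)

lemma IsOrbitOn.strictAntiOn_snd (hC : ContDiffOn ℝ 1 h (Icc (-1) 1))
    (hγ : IsOrbitOn h 1 γ (EIoo 0 b)) (hlim : Tendsto (fun t => (γ t).2) (𝓝[>] 0) (𝓝 1))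
    (hy₀ : y₀ ∈ rootSet h) : StrictAntiOn (fun t => (γ t).2) (EIoo 0 b) := by
  have := hγ.strictMonoOn_of_deriv_pos (fun _ ht => (hγ.hasDerivAt_snd ht).neg)
    fun _ ht => neg_pos.2 (F_snd_neg_of_yFactor_neg (hγ.mem ht) (hγ.yFactor_neg hC hlim hy₀ ht))
  exact fun _ ha _ hb hab => neg_lt_neg_iff.1 (this ha hb hab)

end Invariance

section Global

variable {h : ℝ → ℝ} {γ : ℝ → ℝ × ℝ} {b : EReal} {y₀ : ℝ}

lemma IsOrbitOn.exists_tendsto_nhdsLT (hC : ContDiffOn ℝ 1 h (Icc (-1) 1)) {B : ℝ} (hB : 0 < B)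
    (hγ : IsOrbitOn h 1 γ (EIoo 0 B)) (hlim : Tendsto (fun t => (γ t).2) (𝓝[>] 0) (𝓝 1))
    (hy₀ : y₀ ∈ rootSet h) : ∃ p ∈ PhasePlane, Tendsto γ (𝓝[<] B) (𝓝 p) := by
  have hsub : Ioo (B / 2) B ⊆ EIoo 0 B := by
    rw [EIoo_zero_coe]
    exact Ioo_subset_Ioo_left (by linarith)
  have ha : B / 2 ∈ EIoo 0 B := by
    rw [EIoo_zero_coe]
    constructor <;> linarith
  obtain ⟨s, hs⟩ : (Ioo (B / 2) B).Nonempty := nonempty_Ioo.2 (by linarith)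
  have hxbdd : BddAbove ((fun t => (γ t).1) '' Ioo (B / 2) B) := by
    refine ⟨(γ (B / 2)).1 + B, ?_⟩
    rintro _ ⟨t, ht, rfl⟩
    have := hγ.strictMonoOn_sub_fst ha (hsub ht) ht.1
    simp only at this ⊢
    linarith [ht.2]
  have hybdd : BddBelow ((fun t => (γ t).2) '' Ioo (B / 2) B) := by
    refine ⟨y₀, ?_⟩
    rintro _ ⟨t, ht, rfl⟩
    exact (hγ.lt_snd hlim hy₀ (hsub ht)).le
  have hxlim := ((hγ.strictMonoOn_fst hlim hy₀).monotoneOn.mono hsub).tendsto_nhdsWithin_Ioo_left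
    ⟨s, hs⟩ hxbdd
  have hylim := ((hγ.strictAntiOn_snd hC hlim hy₀).antitoneOn.mono hsub).tendsto_nhdsWithin_Ioo_left
    ⟨s, hs⟩ hybdd
  refine ⟨_, ⟨?_, ?_, ?_⟩, hxlim.prodMk_nhds hylim⟩
  · exact (hγ.mem (hsub hs)).1.trans_le (le_csSup hxbdd ⟨s, hs, rfl⟩)
  · refine (show (-1 : ℝ) < y₀ by linarith [hy₀.1.1]).trans_le
      (le_csInf (Nonempty.image _ ⟨s, hs⟩) ?_)
    rintro _ ⟨t, ht, rfl⟩
    exact (hγ.lt_snd hlim hy₀ (hsub ht)).le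
  · exact (csInf_le hybdd ⟨s, hs, rfl⟩).trans_lt (hγ.mem (hsub hs)).2.2

lemma IsMaxOrbitOn.zero_lt {ε : ℝ} (hC : ContDiffOn ℝ 1 h (Icc (-1) 1))
    (hmax : IsMaxOrbitOn h ε γ (EIoo 0 b)) : 0 < b := by
  by_contra! hb
  have hempty : EIoo 0 b = ∅ :=
    eq_empty_of_forall_notMem fun s hs => (hs.1.trans hs.2).not_ge hb
  obtain ⟨ψ, l, u, hlu, -, hψ⟩ :=
    exists_isOrbitOn_Ioo hC ε (p := (1, 0)) ⟨by norm_num, by norm_num, by norm_num⟩ 0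
  have := hmax.2 ψ _ hψ (hempty ▸ empty_subset _) (hempty ▸ eqOn_empty _ _)
  rw [hempty] at this
  exact (this ▸ hlu : (0 : ℝ) ∈ (∅ : Set ℝ))

lemma IsMaxOrbitOn.eq_top (hC : ContDiffOn ℝ 1 h (Icc (-1) 1))
    (hmax : IsMaxOrbitOn h 1 γ (EIoo 0 b)) (hlim : Tendsto (fun t => (γ t).2) (𝓝[>] 0) (𝓝 1))
    (hy₀ : y₀ ∈ rootSet h) : b = ⊤ := by
  have h0b := hmax.zero_lt hC
  by_contra hb
  obtain ⟨B, rfl⟩ : ∃ B : ℝ, (B : EReal) = b := ⟨b.toReal, EReal.coe_toReal hb h0b.ne_bot⟩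
  have hB : 0 < B := EReal.coe_pos.1 h0b
  obtain ⟨p, hp, hγp⟩ := hmax.1.exists_tendsto_nhdsLT hC hB hlim hy₀
  obtain ⟨ψ, l, u, hBlu, rfl, hψ⟩ := exists_isOrbitOn_Ioo hC 1 hp B
  rw [EIoo_zero_coe] at hmax
  have hext := hmax.1.ite hC hB hψ hBlu hγp
  have := hmax.2 _ _ hext (Ioo_subset_Ioo_right hBlu.2.le) fun t ht => if_pos ht.2
  exact (this ▸ ⟨hB, hBlu.2⟩ : B ∈ Ioo 0 B).2.false

lemma IsOrbitOn.exists_tendsto_snd_atTop (hC : ContDiffOn ℝ 1 h (Icc (-1) 1))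
    (hγ : IsOrbitOn h 1 γ (EIoo 0 ⊤)) (hlim : Tendsto (fun t => (γ t).2) (𝓝[>] 0) (𝓝 1))
    (hy₀ : y₀ ∈ rootSet h) :
    ∃ ℓ, y₀ ≤ ℓ ∧ ℓ < 1 ∧ Tendsto (fun t => (γ t).2) atTop (𝓝 ℓ) := by
  have hanti := hγ.strictAntiOn_snd hC hlim hy₀
  have hgt : ∀ᶠ s in atTop, y₀ < (γ s).2 :=
    eventually_mem_EIoo_zero_top.mono fun _ => hγ.lt_snd hlim hy₀
  rw [EIoo_zero_top] at hanti
  obtain hbot | ⟨ℓ, hℓ⟩ := hanti.antitoneOn.tendsto_atBot_or_exists_tendsto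
  · obtain ⟨s, hs, hs'⟩ := ((hbot.eventually_lt_atBot y₀).and hgt).exists
    exact absurd hs' hs.not_gt
  refine ⟨ℓ, ge_of_tendsto hℓ (hgt.mono fun _ => le_of_lt), ?_, hℓ⟩
  refine (le_of_tendsto hℓ ((eventually_gt_atTop 1).mono fun s hs =>
    (hanti (mem_Ioi.2 one_pos) (mem_Ioi.2 (one_pos.trans hs)) hs).le)).trans_lt ?_
  exact (hγ.mem (mem_EIoo_zero_top one_pos)).2.2

/-- If `x` stayed bounded, `y` would tend to `0 = y₀`, i.e. `2 h 0 = 1`, and then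
`y' → 1 / tanh X - 1 ≠ 0`. -/
lemma IsOrbitOn.tendsto_fst_atTop (hC : ContDiffOn ℝ 1 h (Icc (-1) 1))
    (hγ : IsOrbitOn h 1 γ (EIoo 0 ⊤)) (hlim : Tendsto (fun t => (γ t).2) (𝓝[>] 0) (𝓝 1))
    (hy₀ : y₀ ∈ rootSet h) : Tendsto (fun t => (γ t).1) atTop atTop := by
  have hmono := hγ.strictMonoOn_fst hlim hy₀
  rw [EIoo_zero_top] at hmono
  refine hmono.monotoneOn.tendsto_atTop_or_exists_tendsto.resolve_right ?_
  rintro ⟨X, hX⟩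
  obtain ⟨ℓ, hy₀ℓ, -, hℓ⟩ := hγ.exists_tendsto_snd_atTop hC hlim hy₀
  obtain rfl : ℓ = 0 :=
    eq_zero_of_tendsto_of_tendsto_deriv (eventually_mem_EIoo_zero_top.mono fun _ => hγ.hasDerivAt_fst) hX hℓ
  obtain rfl : y₀ = 0 := le_antisymm hy₀ℓ hy₀.1.1
  have hX0 : 0 < X := (hγ.mem (mem_EIoo_zero_top one_pos)).1.trans_le <| ge_of_tendsto hX <|
    (eventually_ge_atTop 1).mono fun s hs => hmono.monotoneOn (mem_Ioi.2 one_pos)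
      (mem_Ioi.2 (one_pos.trans_le hs)) hs
  have hF : Tendsto (fun s => (F h 1 (γ s)).2) atTop (𝓝 (F h 1 (X, 0)).2) :=
    (continuous_snd.tendsto _).comp <| (contDiffAt_F hC 1 (p := (X, 0))
      ⟨hX0, by norm_num, by norm_num⟩).continuousAt.tendsto.comp (hX.prodMk_nhds hℓ)
  have hF0 := eq_zero_of_tendsto_of_tendsto_deriv
    (eventually_mem_EIoo_zero_top.mono fun _ => hγ.hasDerivAt_snd) hℓ hF
  have h0 : 2 * h 0 = 1 := by simpa using hy₀.2
  simp only [F] at hF0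
  norm_num [h0, sub_eq_zero] at hF0
  exact (Real.tanh_lt_one X).ne hF0

lemma IsOrbitOn.tendsto_snd_atTop (hC : ContDiffOn ℝ 1 h (Icc (-1) 1))
    (hγ : IsOrbitOn h 1 γ (EIoo 0 ⊤)) (hlim : Tendsto (fun t => (γ t).2) (𝓝[>] 0) (𝓝 1))
    (hy₀ : IsGreatest (rootSet h) y₀) : Tendsto (fun t => (γ t).2) atTop (𝓝 y₀) := by
  obtain ⟨ℓ, hy₀ℓ, hℓ1, hℓ⟩ := hγ.exists_tendsto_snd_atTop hC hlim hy₀.1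
  have hℓ0 : 0 ≤ ℓ := hy₀.1.1.1.trans hy₀ℓ
  have hsq : Tendsto (fun s => 1 - (γ s).2 ^ 2) atTop (𝓝 (1 - ℓ ^ 2)) :=
    tendsto_const_nhds.sub (hℓ.pow 2)
  have hhℓ : ContinuousAt h ℓ :=
    hC.continuousOn.continuousAt (Icc_mem_nhds (by linarith) hℓ1)
  have hF : Tendsto (fun s => (F h 1 (γ s)).2) atTop
      (𝓝 ((1 - ℓ ^ 2) / 1 - 2 * 1 * h ℓ * √(1 - ℓ ^ 2))) :=
    (hsq.div (Real.tendsto_tanh_atTop.comp (hγ.tendsto_fst_atTop hC hlim hy₀.1)) one_ne_zero).sub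
      ((tendsto_const_nhds.mul (hhℓ.tendsto.comp hℓ)).mul
        ((Real.continuous_sqrt.tendsto _).comp hsq))
  have h0 := eq_zero_of_tendsto_of_tendsto_deriv
    (eventually_mem_EIoo_zero_top.mono fun _ => hγ.hasDerivAt_snd) hℓ hF
  have hsqrt := Real.sqrt_pos.2 (show 0 < 1 - ℓ ^ 2 by nlinarith)
  have hsq' := Real.sq_sqrt (show 0 ≤ 1 - ℓ ^ 2 by nlinarith)
  have hroot : ℓ ∈ rootSet h := by
    refine ⟨⟨hℓ0, hℓ1⟩, mul_right_cancel₀ hsqrt.ne' ?_⟩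
    nlinarith
  rwa [le_antisymm (hy₀.2 hroot) hy₀ℓ] at hℓ

end Global

/-- h-bowls: if `h(1) > 0` and `2h(ys) = √(1-ys²)` for some `ys ∈ [0,1)`,
then `{y ∈ [0,1) : 2h(y) = √(1-y²)}` has a maximum `y₀`, and every maximal orbit of `F₁`
on `(0,b)` emanating from `(0,1)` is defined for all `s > 0`, has strictly increasing
`x`-coordinate tending to `∞`, and strictly decreasing `y`-coordinate staying above `y₀`
and tending to `y₀`. -/
theorem stmt5 (h : ℝ → ℝ) (hC : ContDiffOn ℝ 1 h (Set.Icc (-1 : ℝ) 1)) (h1 : 0 < h 1)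
    (hex : ∃ ys ∈ Set.Ico (0 : ℝ) 1, 2 * h ys = Real.sqrt (1 - ys ^ 2)) :
    ∃ y₀ : ℝ, IsGreatest {y ∈ Set.Ico (0 : ℝ) 1 | 2 * h y = Real.sqrt (1 - y ^ 2)} y₀ ∧
      ∀ (b : EReal) (γ : ℝ → ℝ × ℝ), IsMaxOrbitOn h 1 γ (EIoo 0 b) →
        Filter.Tendsto γ (nhdsWithin 0 (Set.Ioi 0)) (nhds ((0 : ℝ), (1 : ℝ))) →
        b = ⊤ ∧
        StrictMonoOn (fun s => (γ s).1) (Set.Ioi 0) ∧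
        Filter.Tendsto (fun s => (γ s).1) Filter.atTop Filter.atTop ∧
        StrictAntiOn (fun s => (γ s).2) (Set.Ioi 0) ∧
        (∀ s ∈ Set.Ioi (0 : ℝ), y₀ < (γ s).2) ∧
        Filter.Tendsto (fun s => (γ s).2) Filter.atTop (nhds y₀) := by
  obtain ⟨y₀, hy₀⟩ := exists_isGreatest_rootSet
    (hC.continuousOn.mono (Icc_subset_Icc_left (by norm_num))) h1 hex
  refine ⟨y₀, hy₀, fun b γ hmax hγ0 => ?_⟩
  have hlim : Tendsto (fun s => (γ s).2) (𝓝[>] 0) (𝓝 1) := (continuous_snd.tendsto _).comp hγ0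
  obtain rfl := hmax.eq_top hC hlim hy₀.1
  have hγ := hmax.1
  refine ⟨rfl, ?_, hγ.tendsto_fst_atTop hC hlim hy₀.1, ?_, ?_, hγ.tendsto_snd_atTop hC hlim hy₀⟩ <;>
    rw [← EIoo_zero_top]
  · exact hγ.strictMonoOn_fst hlim hy₀.1
  · exact hγ.strictAntiOn_snd hC hlim hy₀.1
  · exact fun s hs => hγ.lt_snd hlim hy₀.1 hs
end

section
/- Let h : [-1,1] → ℝ be C¹ with h'(y) ≠ 0 for every y ∈ (-1,1), and let ε ∈ {-1,1}. Then the system γ' = F_ε∘γ has no closed orbit in Θ: there is no nonconstant periodic solution γ : ℝ → Θ of γ'(s) = F_ε(γ(s)). -/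
/-!
Multiplying `F_ε` by the Dulac function `α = sinh x / √(1 - y²)` gives, for `ε = 0`, the
Hamiltonian vector field of `H = sinh x · √(1 - y²)`; for general `ε`, `H` changes along solutions
at rate `2ε h(y) y sinh x`. Subtracting `2ε h(0) cosh x`, whose rate is `2ε h(0) y sinh x`, yields
`lyapunov h ε` with rate `2ε (h(y) - h(0)) y sinh x`. By Darboux's theorem `h'` has constant sign,
so `(h(y) - h(0)) y` has the sign of `h'(0)` whenever `y ≠ 0`, and `ε h'(0) · lyapunov h ε` is
nondecreasing along solutions. Along a periodic solution it is therefore constant, which forces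
`y ≡ 0`, hence `x' = y = 0`, and the solution is constant.
-/

open Filter Set

open Real Function

theorem deriv_mul_sub_mul_sub_pos {h : ℝ → ℝ} {s : Set ℝ} (hs : Convex ℝ s) (hso : IsOpen s)
    (hd : ∀ y ∈ s, deriv h y ≠ 0) {x y : ℝ} (hx : x ∈ s) (hy : y ∈ s) (hxy : y ≠ x) :
    0 < deriv h x * ((h y - h x) * (y - x)) := by
  have hdiff : ∀ z ∈ s, HasDerivWithinAt h (deriv h z) s z := fun z hz =>
    (differentiableAt_of_deriv_ne_zero (hd z hz)).hasDerivAt.hasDerivWithinAt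
  have hcont : ContinuousOn h s := fun z hz => (hdiff z hz).continuousWithinAt
  rcases hasDerivWithinAt_forall_lt_or_forall_gt_of_forall_ne hs hdiff hd with hneg | hpos
  · have hanti := strictAntiOn_of_deriv_neg hs hcont (by rwa [hso.interior_eq])
    refine mul_pos_of_neg_of_neg (hneg x hx) ?_
    rcases hxy.lt_or_gt with hlt | hlt
    · exact mul_neg_of_pos_of_neg (sub_pos.2 (hanti hy hx hlt)) (sub_neg.2 hlt)
    · exact mul_neg_of_neg_of_pos (sub_neg.2 (hanti hx hy hlt)) (sub_pos.2 hlt)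
  · have hmono := strictMonoOn_of_deriv_pos hs hcont (by rwa [hso.interior_eq])
    refine mul_pos (hpos x hx) ?_
    rcases hxy.lt_or_gt with hlt | hlt
    · exact mul_pos_of_neg_of_neg (sub_neg.2 (hmono hy hx hlt)) (sub_neg.2 hlt)
    · exact mul_pos (sub_pos.2 (hmono hx hy hlt)) (sub_pos.2 hlt)

theorem Function.Periodic.eq_of_monotone {β : Type*} [PartialOrder β] {f : ℝ → β} {c : ℝ}
    (hf : Periodic f c) (hc : 0 < c) (hmono : Monotone f) (x y : ℝ) : f x = f y := by
  have hle : ∀ a b, a ≤ b → f b ≤ f a := fun a b _ => by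
    obtain ⟨n, hn⟩ := exists_nat_gt ((b - a) / c)
    have hb : b ≤ a + n * c := by rw [div_lt_iff₀ hc] at hn; linarith
    exact (hmono hb).trans (hf.nat_mul n a).le
  rcases le_total x y with hxy | hxy
  · exact le_antisymm (hmono hxy) (hle x y hxy)
  · exact le_antisymm (hle y x hxy) (hmono hxy)

theorem Function.Periodic.eq_zero_of_hasDerivAt_nonneg {f f' : ℝ → ℝ} {c : ℝ}
    (hf : Periodic f c) (hc : 0 < c) (hderiv : ∀ x, HasDerivAt f (f' x) x)
    (hnonneg : ∀ x, 0 ≤ f' x) (x : ℝ) : f' x = 0 := by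
  have hconst : f = fun _ => f x :=
    funext fun y => hf.eq_of_monotone hc (monotone_of_hasDerivAt_nonneg hderiv hnonneg) y x
  exact (hderiv x).unique (hconst ▸ hasDerivAt_const x (f x))

theorem HasDerivAt.fst {E G : Type*} [NormedAddCommGroup E] [NormedSpace ℝ E]
    [NormedAddCommGroup G] [NormedSpace ℝ G] {f : ℝ → E × G} {f' : E × G} {x : ℝ}
    (hf : HasDerivAt f f' x) : HasDerivAt (fun t => (f t).1) f'.1 x := by
  simpa using hf.hasFDerivAt.fst.hasDerivAt

theorem HasDerivAt.snd {E G : Type*} [NormedAddCommGroup E] [NormedSpace ℝ E]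
    [NormedAddCommGroup G] [NormedSpace ℝ G] {f : ℝ → E × G} {f' : E × G} {x : ℝ}
    (hf : HasDerivAt f f' x) : HasDerivAt (fun t => (f t).2) f'.2 x := by
  simpa using hf.hasFDerivAt.snd.hasDerivAt

noncomputable def lyapunov (h : ℝ → ℝ) (ε : ℝ) (p : ℝ × ℝ) : ℝ :=
  sinh p.1 * √(1 - p.2 ^ 2) - 2 * ε * h 0 * cosh p.1

noncomputable def lyapunovDeriv (h : ℝ → ℝ) (ε : ℝ) (p : ℝ × ℝ) : ℝ :=
  2 * ε * (h p.2 - h 0) * p.2 * sinh p.1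

theorem hasDerivAt_lyapunov_comp {h : ℝ → ℝ} {ε : ℝ} {γ : ℝ → ℝ × ℝ} {s : ℝ}
    (hγ : γ s ∈ PhasePlane) (hγ' : HasDerivAt γ (F h ε (γ s)) s) :
    HasDerivAt (fun t => lyapunov h ε (γ t)) (lyapunovDeriv h ε (γ s)) s := by
  obtain ⟨hx, hy⟩ := hγ
  set x := (γ s).1 with hx_def
  set y := (γ s).2 with hy_def
  have hX : HasDerivAt (fun t => (γ t).1) y s := hγ'.fst
  have hY : HasDerivAt (fun t => (γ t).2) (F h ε (γ s)).2 s := hγ'.snd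
  have h1y : 0 < 1 - y ^ 2 := by nlinarith [hy.1, hy.2]
  have hsqrt := ((hY.pow 2).const_sub 1).sqrt h1y.ne'
  have hM := (((hasDerivAt_sinh x).comp s hX).mul hsqrt).sub
    (((hasDerivAt_cosh x).comp s hX).const_mul (2 * ε * h 0))
  refine hM.congr_deriv ?_
  have hq2 : √(1 - y ^ 2) ^ 2 = 1 - y ^ 2 := sq_sqrt h1y.le
  have hsqrt_pos : 0 < √(1 - y ^ 2) := sqrt_pos.mpr h1y
  have hsinh : 0 < sinh x := sinh_pos_iff.mpr hx
  simp only [F, lyapunovDeriv, Pi.pow_apply, comp_apply, Nat.cast_ofNat,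
    Nat.add_one_sub_one, pow_one, tanh_eq_sinh_div_cosh, ← hx_def, ← hy_def]
  field_simp
  linear_combination y * cosh x * hq2

theorem mul_lyapunovDeriv_pos {h : ℝ → ℝ} (hd : ∀ y ∈ Ioo (-1 : ℝ) 1, deriv h y ≠ 0)
    {ε : ℝ} (hε : ε ≠ 0) {p : ℝ × ℝ} (hp : p ∈ PhasePlane) (hp₂ : p.2 ≠ 0) :
    0 < ε * deriv h 0 * lyapunovDeriv h ε p := by
  have hsign := deriv_mul_sub_mul_sub_pos (convex_Ioo _ _) isOpen_Ioo hd
    (by norm_num : (0 : ℝ) ∈ Ioo (-1 : ℝ) 1) hp.2 hp₂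
  have hsinh : 0 < sinh p.1 := sinh_pos_iff.mpr hp.1
  rw [sub_zero] at hsign
  calc 0 < 2 * ε ^ 2 * (deriv h 0 * ((h p.2 - h 0) * p.2)) * sinh p.1 := by positivity
    _ = ε * deriv h 0 * lyapunovDeriv h ε p := by unfold lyapunovDeriv; ring

theorem mul_lyapunovDeriv_nonneg {h : ℝ → ℝ} (hd : ∀ y ∈ Ioo (-1 : ℝ) 1, deriv h y ≠ 0)
    {ε : ℝ} (hε : ε ≠ 0) {p : ℝ × ℝ} (hp : p ∈ PhasePlane) :
    0 ≤ ε * deriv h 0 * lyapunovDeriv h ε p := by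
  rcases eq_or_ne p.2 0 with hp₂ | hp₂
  · simp [lyapunovDeriv, hp₂]
  · exact (mul_lyapunovDeriv_pos hd hε hp hp₂).le

theorem eq_of_forall_snd_eq_zero {h : ℝ → ℝ} {ε : ℝ} {γ : ℝ → ℝ × ℝ}
    (hγ : ∀ s, HasDerivAt γ (F h ε (γ s)) s) (h₂ : ∀ s, (γ s).2 = 0) (s t : ℝ) :
    γ s = γ t := by
  have hX : ∀ s, HasDerivAt (fun t => (γ t).1) 0 s := fun s => h₂ s ▸ (hγ s).fst
  exact Prod.ext (is_const_of_deriv_eq_zero (fun s => (hX s).differentiableAt)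
    (fun s => (hX s).deriv) s t) ((h₂ s).trans (h₂ t).symm)

theorem stmt7_general (h : ℝ → ℝ)
    (hd : ∀ y ∈ Set.Ioo (-1 : ℝ) 1, deriv h y ≠ 0) (ε : ℝ) (hε : ε = 1 ∨ ε = -1) :
    ¬ ∃ (γ : ℝ → ℝ × ℝ) (T : ℝ), 0 < T ∧
        (∀ s : ℝ, γ s ∈ PhasePlane) ∧
        (∀ s : ℝ, HasDerivAt γ (F h ε (γ s)) s) ∧
        (∀ s : ℝ, γ (s + T) = γ s) ∧
        (∃ s t : ℝ, γ s ≠ γ t) := by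
  rintro ⟨γ, T, hT, hΘ, hγ, hper, s, t, hst⟩
  have hε₀ : ε ≠ 0 := by rcases hε with rfl | rfl <;> norm_num
  refine hst (eq_of_forall_snd_eq_zero hγ (fun u => ?_) s t)
  by_contra hu
  have hrate : ε * deriv h 0 * lyapunovDeriv h ε (γ u) = 0 :=
    Periodic.eq_zero_of_hasDerivAt_nonneg (f := fun t => ε * deriv h 0 * lyapunov h ε (γ t))
      (fun t => by simp only [hper]) hT
      (fun t => (hasDerivAt_lyapunov_comp (hΘ t) (hγ t)).const_mul _)
      (fun t => mul_lyapunovDeriv_nonneg hd hε₀ (hΘ t)) u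
  exact (mul_lyapunovDeriv_pos hd hε₀ (hΘ u) hu).ne' hrate

/-- Bendixson–Dulac: if `h' ≠ 0` on `(-1,1)`, the system `γ' = F_ε ∘ γ`
has no nonconstant periodic solution in the phase plane. -/
theorem stmt7 (h : ℝ → ℝ) (hC : ContDiffOn ℝ 1 h (Set.Icc (-1 : ℝ) 1))
    (hd : ∀ y ∈ Set.Ioo (-1 : ℝ) 1, deriv h y ≠ 0) (ε : ℝ) (hε : ε = 1 ∨ ε = -1) :
    ¬ ∃ (γ : ℝ → ℝ × ℝ) (T : ℝ), 0 < T ∧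
        (∀ s : ℝ, γ s ∈ PhasePlane) ∧
        (∀ s : ℝ, HasDerivAt γ (F h ε (γ s)) s) ∧
        (∀ s : ℝ, γ (s + T) = γ s) ∧
        (∃ s t : ℝ, γ s ≠ γ t) :=
  stmt7_general h hd ε hε
end
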